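/- Let G = (V, E, f) be a d-featured graph, L ≥ 0, c ≥ 1, and let n : V → ℕ be an enumeration for G. Then there exists a graph Ĝ = (V, Ê, f) over the same vertices and features such that for all u, v, w ∈ V: (1) G, v ∼^{L,c,*}_∃ Ĝ, v; (2) if v and u have the same ∼^{L,c}-type in G, then (v, w) ∈ Ê iff (u, w) ∈ Ê; (3) if (v, w) ∈ Ê, then for every w′ ∈ V with the same ∼^{L,c}-type in G as w and n(w′) < n(w), also (v, w′) ∈ Ê; and (4) if (v, w) ∈ Ê and n(w) ≥ c, then (v, w′) ∈ Ê for every w′ ∈ V with the same ∼^{L,c}-type in G as w. -/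

import Mathlib

/-- A `d`-featured directed graph: finite nonempty vertex set, edge relation,
and a feature map into `{0,1}^d` (represented as `Fin d → Bool`). -/
structure FGraph (d : ℕ) where
  V : Type
  [fintypeV : Fintype V]
  nonemptyV : Nonempty V
  E : V → V → Prop
  f : V → Fin d → Bool

attribute [instance] FGraph.fintypeV

/-- `c`-graded `L`-turn bisimilarity between pointed `d`-featured graphs. -/
def bisim (d c : ℕ) : (L : ℕ) → (G₁ G₂ : FGraph d) → G₁.V → G₂.V → Prop
  | 0, G₁, G₂, v₁, v₂ => G₁.f v₁ = G₂.f v₂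
  | L + 1, G₁, G₂, v₁, v₂ =>
      G₁.f v₁ = G₂.f v₂ ∧
      (∀ k, k ≤ c → ∀ u₁ : Fin k → G₁.V, Function.Injective u₁ →
        (∀ i, G₁.E v₁ (u₁ i)) →
        ∃ u₂ : Fin k → G₂.V, Function.Injective u₂ ∧ (∀ i, G₂.E v₂ (u₂ i)) ∧
          ∀ i, bisim d c L G₁ G₂ (u₁ i) (u₂ i)) ∧
      (∀ k, k ≤ c → ∀ u₂ : Fin k → G₂.V, Function.Injective u₂ →
        (∀ i, G₂.E v₂ (u₂ i)) →
        ∃ u₁ : Fin k → G₁.V, Function.Injective u₁ ∧ (∀ i, G₁.E v₁ (u₁ i)) ∧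
          ∀ i, bisim d c L G₁ G₂ (u₁ i) (u₂ i))

/-- `∼^{L,c,*}_∃` : `c`-graded `L`-turn bisimilarity with (unbounded) global counting. -/
def bisimStar (d c L : ℕ) (G₁ G₂ : FGraph d) (v₁ : G₁.V) (v₂ : G₂.V) : Prop :=
  bisim d c L G₁ G₂ v₁ v₂ ∧
  (∀ u : G₁.V,
    Set.ncard {u₁ : G₁.V | bisim d c L G₁ G₁ u₁ u} =
      Set.ncard {u₂ : G₂.V | bisim d c L G₂ G₁ u₂ u}) ∧
  (∀ u : G₂.V,
    Set.ncard {u₁ : G₁.V | bisim d c L G₁ G₂ u₁ u} =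
      Set.ncard {u₂ : G₂.V | bisim d c L G₂ G₂ u₂ u})

/-- `∼^{L,c,q}_∃` : `c`-graded `L`-turn bisimilarity with global counting bounded by `q`. -/
def bisimQ (d c L q : ℕ) (G₁ G₂ : FGraph d) (v₁ : G₁.V) (v₂ : G₂.V) : Prop :=
  bisim d c L G₁ G₂ v₁ v₂ ∧
  (∀ u : G₁.V,
    min (Set.ncard {u₁ : G₁.V | bisim d c L G₁ G₁ u₁ u}) q =
      min (Set.ncard {u₂ : G₂.V | bisim d c L G₂ G₁ u₂ u}) q) ∧
  (∀ u : G₂.V,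
    min (Set.ncard {u₁ : G₁.V | bisim d c L G₁ G₂ u₁ u}) q =
      min (Set.ncard {u₂ : G₂.V | bisim d c L G₂ G₂ u₂ u}) q)
/-- Two vertices of `G` have the same `∼^{L,c}`-type iff exactly the same pointed
graphs are `∼^{L,c}`-bisimilar to them. -/
def sameType (d c L : ℕ) (G : FGraph d) (u w : G.V) : Prop :=
  ∀ (H : FGraph d) (x : H.V), bisim d c L G H u x ↔ bisim d c L G H w x

/-- An enumeration for `G`: a map `n : V → ℕ` restricting, on each
`∼^{L,c}`-type class, to a bijection onto `{1, …, size of the class}`. -/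
def IsEnum (d c L : ℕ) (G : FGraph d) (n : G.V → ℕ) : Prop :=
  ∀ w : G.V,
    Set.BijOn n {u : G.V | sameType d c L G u w}
      (Set.Icc 1 (Set.ncard {u : G.V | sameType d c L G u w}))


/-!
`Ĝ` replaces every out-neighbourhood by a canonical one. A vertex looks at a fixed
representative `r` of its `∼^{L,c}`-class and, for every class `t`, is joined to the first
members of `t` in the enumeration: as many as `r` has out-neighbours in `t` while that number
is below `c`, and all of `t` otherwise. Graded bisimilarity counts out-neighbours in a class
only up to `c`, so in each back-and-forth step the at most `c` chosen neighbours can be matched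
injectively, class by class, with neighbours in the other graph; by induction on the number of
turns every vertex is then `∼^{L,c}`-bisimilar to itself in `Ĝ`, and the counting conditions
follow because the identity map preserves bisimilarity.
-/

open Finset Function

theorem exists_injective_forall_mem_of_card_fiber_le {ι α β : Type*} [Fintype ι] [DecidableEq β]
    (f : ι → β) (A : β → Finset α) (hA : Pairwise (Disjoint on A))
    (hcard : ∀ b, #{i | f i = b} ≤ #(A b)) :
    ∃ q : ι → α, Injective q ∧ ∀ i, q i ∈ A (f i) := by
  have he : ∀ b, Nonempty ({i // f i = b} ↪ A b) := fun b =>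
    Function.Embedding.nonempty_of_card_le (by simpa [Fintype.card_subtype] using hcard b)
  let e b := (he b).some
  refine ⟨fun i => e (f i) ⟨i, rfl⟩, fun i j hij => ?_, fun i => (e (f i) ⟨i, rfl⟩).2⟩
  replace hij : (e (f i) ⟨i, rfl⟩ : α) = e (f j) ⟨j, rfl⟩ := hij
  have hf : f i = f j := by
    by_contra hne
    exact disjoint_left.mp (hA hne) (e (f i) ⟨i, rfl⟩).2 (hij ▸ (e (f j) ⟨j, rfl⟩).2)
  have he_congr : ∀ b (hj : f j = b), (e b ⟨j, hj⟩ : α) = e (f j) ⟨j, rfl⟩ := by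
    rintro _ rfl; rfl
  rw [← he_congr (f i) hf.symm] at hij
  exact congrArg Subtype.val ((e (f i)).injective (Subtype.coe_injective hij))

section Bisimilarity

variable {d c : ℕ}

theorem bisim_refl : ∀ (L : ℕ) (G : FGraph d) (v : G.V), bisim d c L G G v v
  | 0, _, _ => rfl
  | L + 1, G, _ =>
      ⟨rfl,
        fun _ _ u hu hE => ⟨u, hu, hE, fun i => bisim_refl L G (u i)⟩,
        fun _ _ u hu hE => ⟨u, hu, hE, fun i => bisim_refl L G (u i)⟩⟩

theorem bisim_symm : ∀ {L : ℕ} {G₁ G₂ : FGraph d} {v₁ : G₁.V} {v₂ : G₂.V},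
    bisim d c L G₁ G₂ v₁ v₂ → bisim d c L G₂ G₁ v₂ v₁
  | 0, _, _, _, _, h => h.symm
  | _ + 1, _, _, _, _, ⟨hf, hforth, hback⟩ =>
      ⟨hf.symm,
        fun k hk u hu hE =>
          let ⟨u', h1, h2, h3⟩ := hback k hk u hu hE
          ⟨u', h1, h2, fun i => bisim_symm (h3 i)⟩,
        fun k hk u hu hE =>
          let ⟨u', h1, h2, h3⟩ := hforth k hk u hu hE
          ⟨u', h1, h2, fun i => bisim_symm (h3 i)⟩⟩

theorem bisim_trans : ∀ {L : ℕ} {G₁ G₂ G₃ : FGraph d} {v₁ : G₁.V} {v₂ : G₂.V} {v₃ : G₃.V},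
    bisim d c L G₁ G₂ v₁ v₂ → bisim d c L G₂ G₃ v₂ v₃ → bisim d c L G₁ G₃ v₁ v₃
  | 0, _, _, _, _, _, _, h, h' => h.trans h'
  | _ + 1, _, _, _, _, _, _, ⟨hf, hforth, hback⟩, ⟨hf', hforth', hback'⟩ =>
      ⟨hf.trans hf',
        fun k hk u hu hE =>
          let ⟨u', h1, h2, h3⟩ := hforth k hk u hu hE
          let ⟨u'', h1', h2', h3'⟩ := hforth' k hk u' h1 h2
          ⟨u'', h1', h2', fun i => bisim_trans (h3 i) (h3' i)⟩,
        fun k hk u hu hE =>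
          let ⟨u', h1, h2, h3⟩ := hback' k hk u hu hE
          let ⟨u'', h1', h2', h3'⟩ := hback k hk u' h1 h2
          ⟨u'', h1', h2', fun i => bisim_trans (h3' i) (h3 i)⟩⟩

theorem bisim_mono : ∀ {L ℓ : ℕ}, ℓ ≤ L → ∀ {G₁ G₂ : FGraph d} {v₁ : G₁.V} {v₂ : G₂.V},
    bisim d c L G₁ G₂ v₁ v₂ → bisim d c ℓ G₁ G₂ v₁ v₂
  | 0, 0, _, _, _, _, _, h => h
  | _ + 1, 0, _, _, _, _, _, h => h.1
  | 0, _ + 1, hℓ, _, _, _, _, _ => absurd hℓ (Nat.not_succ_le_zero _)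
  | _ + 1, _ + 1, hℓ, _, _, _, _, ⟨hf, hforth, hback⟩ =>
      ⟨hf,
        fun k hk u hu hE =>
          let ⟨u', h1, h2, h3⟩ := hforth k hk u hu hE
          ⟨u', h1, h2, fun i => bisim_mono (Nat.le_of_succ_le_succ hℓ) (h3 i)⟩,
        fun k hk u hu hE =>
          let ⟨u', h1, h2, h3⟩ := hback k hk u hu hE
          ⟨u', h1, h2, fun i => bisim_mono (Nat.le_of_succ_le_succ hℓ) (h3 i)⟩⟩

theorem bisim_congr_left {L : ℕ} {G₁ G₂ H : FGraph d} {x : G₁.V} {y : G₂.V} (z : H.V)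
    (h : bisim d c L G₁ G₂ x y) : bisim d c L G₁ H x z ↔ bisim d c L G₂ H y z :=
  ⟨bisim_trans (bisim_symm h), bisim_trans h⟩

theorem sameType_iff_bisim {L : ℕ} {G : FGraph d} {u w : G.V} :
    sameType d c L G u w ↔ bisim d c L G G u w :=
  ⟨fun h => (h G w).mpr (bisim_refl L G w), fun h _ x => bisim_congr_left x h⟩

theorem bisimStar_of_forall_bisim {L : ℕ} {G₁ G₂ : FGraph d} (e : G₁.V ≃ G₂.V)
    (he : ∀ x, bisim d c L G₁ G₂ x (e x)) (v : G₁.V) : bisimStar d c L G₁ G₂ v (e v) := by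
  have image_eq : ∀ {H : FGraph d} (u : H.V),
      e '' {x | bisim d c L G₁ H x u} = {y | bisim d c L G₂ H y u} := by
    intro H u
    ext y
    have hy := he (e.symm y)
    rw [e.apply_symm_apply] at hy
    simpa [e.image_eq_preimage_symm] using bisim_congr_left u hy
  refine ⟨he v, fun u => ?_, fun u => ?_⟩ <;>
    rw [← image_eq, Set.ncard_image_of_injective _ e.injective]

end Bisimilarity

section NormalForm

open Classical

variable {d : ℕ} (c L : ℕ) (G : FGraph d)

def bisimSetoid : Setoid G.V :=
  ⟨bisim d c L G G, ⟨bisim_refl L G, bisim_symm, bisim_trans⟩⟩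

def bisimClass (x : G.V) : Quotient (bisimSetoid c L G) :=
  Quotient.mk _ x

noncomputable def classSize (t : Quotient (bisimSetoid c L G)) : ℕ :=
  #{y | bisimClass c L G y = t}

noncomputable def outDegIn (v : G.V) (t : Quotient (bisimSetoid c L G)) : ℕ :=
  #{y | G.E v y ∧ bisimClass c L G y = t}

noncomputable def quota (v : G.V) (t : Quotient (bisimSetoid c L G)) : ℕ :=
  if outDegIn c L G v t < c then outDegIn c L G v t else classSize c L G t

noncomputable def normalForm (n : G.V → ℕ) : FGraph d :=
  { G with E := fun v w => n w ≤ quota c L G (bisimClass c L G v).out (bisimClass c L G w) }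

variable {c L G}

theorem bisimClass_eq_iff {x y : G.V} :
    bisimClass c L G x = bisimClass c L G y ↔ bisim d c L G G x y :=
  Quotient.eq

theorem sameType_iff_bisimClass_eq {u w : G.V} :
    sameType d c L G u w ↔ bisimClass c L G u = bisimClass c L G w :=
  sameType_iff_bisim.trans bisimClass_eq_iff.symm

theorem bisimClass_surjective : Surjective (bisimClass c L G) :=
  Quotient.mk_surjective

theorem normalForm_E {n : G.V → ℕ} {v w : G.V} :
    (normalForm c L G n).E v w ↔
      n w ≤ quota c L G (bisimClass c L G v).out (bisimClass c L G w) :=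
  Iff.rfl

theorem outDegIn_le_classSize (v : G.V) (t : Quotient (bisimSetoid c L G)) :
    outDegIn c L G v t ≤ classSize c L G t :=
  card_le_card fun _ hy => by simp only [mem_filter, mem_univ, true_and] at hy ⊢; exact hy.2

theorem outDegIn_le_quota (v : G.V) (t : Quotient (bisimSetoid c L G)) :
    outDegIn c L G v t ≤ quota c L G v t := by
  unfold quota
  split_ifs
  exacts [le_rfl, outDegIn_le_classSize v t]

theorem quota_le_classSize (v : G.V) (t : Quotient (bisimSetoid c L G)) :
    quota c L G v t ≤ classSize c L G t := by
  unfold quota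
  split_ifs
  exacts [outDegIn_le_classSize v t, le_rfl]

theorem quota_eq_classSize_of_le {v : G.V} {t : Quotient (bisimSetoid c L G)}
    (h : c ≤ quota c L G v t) : quota c L G v t = classSize c L G t := by
  unfold quota at h ⊢
  split_ifs at h ⊢ <;> omega

variable {n : G.V → ℕ}

theorem IsEnum.bijOn_class (hn : IsEnum d c L G n) (w : G.V) :
    Set.BijOn n {y | bisimClass c L G y = bisimClass c L G w}
      (Set.Icc 1 (classSize c L G (bisimClass c L G w))) := by
  have hclass : {y | sameType d c L G y w} = {y | bisimClass c L G y = bisimClass c L G w} :=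
    Set.ext fun _ => sameType_iff_bisimClass_eq
  have hsize : Set.ncard {y | bisimClass c L G y = bisimClass c L G w} =
      classSize c L G (bisimClass c L G w) := by
    rw [classSize, ← Set.ncard_coe_finset, coe_filter_univ]
  have := hn w
  rwa [hclass, hsize] at this

theorem IsEnum.le_classSize (hn : IsEnum d c L G n) (w : G.V) :
    n w ≤ classSize c L G (bisimClass c L G w) :=
  ((hn.bijOn_class w).mapsTo rfl).2

theorem IsEnum.card_filter_le_eq_min (hn : IsEnum d c L G n) (t : Quotient (bisimSetoid c L G))
    (m : ℕ) : #{y | bisimClass c L G y = t ∧ n y ≤ m} = min m (classSize c L G t) := by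
  obtain ⟨w, rfl⟩ := bisimClass_surjective t
  have hbij := (hn.bijOn_class w).inter_mapsTo (s₂ := {y | n y ≤ m}) (t₂ := Set.Iic m)
    (fun _ h => h) (fun _ h => h.2)
  have hIcc : Set.Icc 1 (classSize c L G (bisimClass c L G w)) ∩ Set.Iic m =
      Set.Icc 1 (min m (classSize c L G (bisimClass c L G w))) := by
    ext; simp only [Set.mem_inter_iff, Set.mem_Icc, Set.mem_Iic]; omega
  rw [← Set.ncard_coe_finset, coe_filter_univ, Set.ofPred_and, hbij.ncard_eq, hIcc,
    Set.ncard_Icc_nat]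
  omega

theorem IsEnum.exists_injective_sameClass_le_quota (hn : IsEnum d c L G n) (r : G.V)
    {ι : Type*} [Fintype ι] (w : ι → G.V) (hw : Injective w) (hE : ∀ i, G.E r (w i)) :
    ∃ q : ι → G.V, Injective q ∧ ∀ i, bisimClass c L G (q i) = bisimClass c L G (w i) ∧
      n (q i) ≤ quota c L G r (bisimClass c L G (w i)) := by
  have hcard : ∀ t, #{i | (bisimClass c L G ∘ w) i = t} ≤
      #{y | bisimClass c L G y = t ∧ n y ≤ quota c L G r t} := by
    intro t
    rw [hn.card_filter_le_eq_min, min_eq_left (quota_le_classSize r t)]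
    calc #{i | (bisimClass c L G ∘ w) i = t}
        ≤ outDegIn c L G r t := card_le_card_of_injOn w (fun i hi => by simp_all) hw.injOn
      _ ≤ quota c L G r t := outDegIn_le_quota r t
  obtain ⟨q, hq, hqA⟩ := exists_injective_forall_mem_of_card_fiber_le _ _
    (fun t t' hne => disjoint_filter.mpr fun _ _ h h' => hne (h.1.symm.trans h'.1)) hcard
  exact ⟨q, hq, fun i => by simpa using hqA i⟩

theorem IsEnum.exists_injective_adj_sameClass_of_le_quota (hn : IsEnum d c L G n) (r : G.V)
    {ι : Type*} [Fintype ι] (hι : Fintype.card ι ≤ c) (z : ι → G.V) (hz : Injective z)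
    (hE : ∀ i, n (z i) ≤ quota c L G r (bisimClass c L G (z i))) :
    ∃ w : ι → G.V, Injective w ∧
      ∀ i, G.E r (w i) ∧ bisimClass c L G (w i) = bisimClass c L G (z i) := by
  have hcard : ∀ t, #{i | (bisimClass c L G ∘ z) i = t} ≤ outDegIn c L G r t := by
    intro t
    by_cases hlt : outDegIn c L G r t < c
    · have hz_le : ∀ i, bisimClass c L G (z i) = t → n (z i) ≤ outDegIn c L G r t := by
        rintro i rfl
        simpa [quota, hlt] using hE i
      calc #{i | (bisimClass c L G ∘ z) i = t}
          ≤ #{y | bisimClass c L G y = t ∧ n y ≤ outDegIn c L G r t} :=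
            card_le_card_of_injOn z (fun i hi => by simp_all) hz.injOn
        _ = outDegIn c L G r t := by
            rw [hn.card_filter_le_eq_min, min_eq_left (outDegIn_le_classSize r t)]
    · calc #{i | (bisimClass c L G ∘ z) i = t} ≤ Fintype.card ι := Finset.card_filter_le _ _
        _ ≤ outDegIn c L G r t := by omega
  obtain ⟨w, hw, hwA⟩ := exists_injective_forall_mem_of_card_fiber_le _
    (fun t => {y | G.E r y ∧ bisimClass c L G y = t})
    (fun t t' hne => disjoint_filter.mpr fun _ _ h h' => hne (h.2.symm.trans h'.2)) hcard
  exact ⟨w, hw, fun i => by simpa using hwA i⟩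

theorem IsEnum.bisim_normalForm (hn : IsEnum d c L G n) :
    ∀ {ℓ : ℕ}, ℓ ≤ L → ∀ {a b : G.V},
      bisim d c ℓ G G a b → bisim d c ℓ G (normalForm c L G n) a b
  | 0, _, _, _, h => h
  | ℓ + 1, hℓ, a, b, h => by
    set r := (bisimClass c L G b).out
    have har : bisim d c (ℓ + 1) G G a r :=
      bisim_trans h (bisim_mono hℓ (bisim_symm (Quotient.mk_out (s := bisimSetoid c L G) b)))
    refine ⟨h.1, fun k hk u hu hE => ?_, fun k hk z hz hE => ?_⟩
    · obtain ⟨w, hw, hwE, huw⟩ := har.2.1 k hk u hu hE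
      obtain ⟨q, hq, hqw⟩ := hn.exists_injective_sameClass_le_quota r w hw hwE
      refine ⟨q, hq, fun i => ?_, fun i => hn.bisim_normalForm (by omega) ?_⟩
      · rw [normalForm_E, (hqw i).1]
        exact (hqw i).2
      · exact bisim_trans (huw i) (bisim_mono (by omega) (bisimClass_eq_iff.mp (hqw i).1.symm))
    · obtain ⟨w, hw, hwz⟩ :=
        hn.exists_injective_adj_sameClass_of_le_quota r (by simpa using hk) z hz hE
      obtain ⟨u, hu, huE, huw⟩ := har.2.2 k hk w hw fun i => (hwz i).1
      exact ⟨u, hu, huE, fun i => hn.bisim_normalForm (by omega)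
        (bisim_trans (huw i) (bisim_mono (by omega) (bisimClass_eq_iff.mp (hwz i).2)))⟩

end NormalForm

theorem stmt11_general (d c L : ℕ) (G : FGraph d) (n : G.V → ℕ)
    (hn : IsEnum d c L G n) :
    ∃ E' : G.V → G.V → Prop,
      (∀ v : G.V, bisimStar d c L G { G with E := E' } v v) ∧
      (∀ v u w : G.V, sameType d c L G v u → (E' v w ↔ E' u w)) ∧
      (∀ v w w' : G.V, E' v w → sameType d c L G w' w → n w' < n w → E' v w') ∧
      (∀ v w w' : G.V, E' v w → c ≤ n w → sameType d c L G w' w → E' v w') := by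
  refine ⟨(normalForm c L G n).E, fun v => ?_, fun v u w hvu => ?_,
    fun v w w' hE hw'w hlt => ?_, fun v w w' hE hcw hw'w => ?_⟩
  · exact bisimStar_of_forall_bisim (G₂ := normalForm c L G n) (Equiv.refl G.V)
      (fun x => hn.bisim_normalForm le_rfl (bisim_refl L G x)) v
  · rw [sameType_iff_bisimClass_eq] at hvu
    rw [normalForm_E, normalForm_E, hvu]
  · rw [sameType_iff_bisimClass_eq] at hw'w
    rw [normalForm_E] at hE ⊢
    rw [hw'w]
    exact hlt.le.trans hE
  · rw [sameType_iff_bisimClass_eq] at hw'w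
    rw [normalForm_E] at hE ⊢
    rw [hw'w, quota_eq_classSize_of_le (hcw.trans hE), ← hw'w]
    exact hn.le_classSize w'

/-- Every featured graph `G` with an enumeration `n` admits a
graph `Ĝ` over the same vertices and features that is `∼^{L,c,*}_∃`-bisimilar to
`G` at every vertex (1), in which vertices of the same `∼^{L,c}`-type have the
same out-neighbours (2), and whose out-edges are downward closed along the
enumeration within each type (3) and saturate a whole type class as soon as
they reach multiplicity `c` (4). -/
theorem stmt11 (d c L : ℕ) (hc : 1 ≤ c) (G : FGraph d) (n : G.V → ℕ)
    (hn : IsEnum d c L G n) :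
    ∃ E' : G.V → G.V → Prop,
      (∀ v : G.V, bisimStar d c L G { G with E := E' } v v) ∧
      (∀ v u w : G.V, sameType d c L G v u → (E' v w ↔ E' u w)) ∧
      (∀ v w w' : G.V, E' v w → sameType d c L G w' w → n w' < n w → E' v w') ∧
      (∀ v w w' : G.V, E' v w → c ≤ n w → sameType d c L G w' w → E' v w') :=
  stmt11_general d c L G n hn
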